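/- For every positive integer d, the set Λ_{d,[d]} consists of path trees only; that is, every γ ∈ Λ_{d,[d]} satisfies br(γ) = 0. -/

import Mathlib

/-!
Along the sequence `Λ_{d,[k]}` every tree is either a path tree or terminally weighted of total
weight `d` and stable strictly below its trunk end. Advancing a ghost child of the branch vertex
preserves these properties, while advancing a positive (hence terminal) child prunes everything
off the trunk and leaves a path tree. For such trees `br γ ≤ d`, because the children of the
branch vertex have disjoint nonempty sets of terminal descendants, each of weight at least one.
A tree `γ' ∈ Λ_{d,[d-1]}` with `br γ' = d` attains this bound, so a ghost child of its branch
vertex, contributing at least two terminal descendants, is impossible: all those children are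
positive and every monoidal transform of `γ'` is a path tree.
-/

open scoped Classical

noncomputable section

/-- A (pre-)tree: a finite set of natural-number labelled vertices, a root,
a parent function and a weight function.  Well-formedness is the predicate
`IsTree` below. -/
structure PreTree where
  verts : Finset ℕ
  root : ℕ
  parent : ℕ → ℕ
  wt : ℕ → ℕ

namespace PreTree

/-- `t.Anc u v` means `u ⪯ v` : `u` lies on the (parent-)path from the root to `v`. -/
def Anc (t : PreTree) (u v : ℕ) : Prop := ∃ n : ℕ, t.parent^[n] v = u

/-- strict ancestor `u ≺ v`. -/
def SAnc (t : PreTree) (u v : ℕ) : Prop := t.Anc u v ∧ u ≠ v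

/-- `t` is an honest finite rooted tree: the root is a vertex, vertices are closed
under `parent`, the root is a fixed point of `parent`, and every vertex descends
from the root. -/
def IsTree (t : PreTree) : Prop :=
  t.root ∈ t.verts ∧ (∀ v ∈ t.verts, t.parent v ∈ t.verts) ∧
    t.parent t.root = t.root ∧ ∀ v ∈ t.verts, t.Anc t.root v

/-- The direct descendants (children) of a vertex. -/
def children (t : PreTree) (u : ℕ) : Finset ℕ :=
  t.verts.filter fun x => t.parent x = u ∧ x ≠ u

/-- A vertex is terminal iff it has no (direct) descendants. -/
def Terminal (t : PreTree) (v : ℕ) : Prop := t.children v = ∅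

/-- Terminally weighted: a vertex has positive weight iff it is terminal. -/
def TerminallyWeighted (t : PreTree) : Prop :=
  ∀ v ∈ t.verts, (0 < t.wt v ↔ t.children v = ∅)

/-- The total weight of a weighted tree. -/
def totalWeight (t : PreTree) : ℕ := ∑ v ∈ t.verts, t.wt v

/-- Stable: every ghost non-root vertex has at least three edges attached to it,
i.e. at least two children. -/
def Stable (t : PreTree) : Prop :=
  ∀ v ∈ t.verts, v ≠ t.root → t.wt v = 0 → 2 ≤ (t.children v).card

/-- Semistable: every ghost non-root vertex has at least two edges attached to it,
i.e. at least one child. -/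
def Semistable (t : PreTree) : Prop :=
  ∀ v ∈ t.verts, v ≠ t.root → t.wt v = 0 → 1 ≤ (t.children v).card

/-- `b` is the last vertex `v_r` of the trunk: every strict ancestor of `b` has
exactly one child while `b` does not. -/
def IsTrunkEnd (t : PreTree) (b : ℕ) : Prop :=
  b ∈ t.verts ∧ (t.children b).card ≠ 1 ∧ ∀ p, t.SAnc p b → (t.children p).card = 1

/-- The number of branches: the number of children of the trunk end (`0` for a
path tree).  For an honest tree the trunk end is unique, so the sum below has at
most one nonzero term. -/
def br (t : PreTree) : ℕ :=
  ∑ b ∈ t.verts.filter (fun b => t.IsTrunkEnd b), (t.children b).card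

/-- `b` is the branch vertex: the trunk end, provided it has at least two children. -/
def IsBranchVertex (t : PreTree) (b : ℕ) : Prop :=
  t.IsTrunkEnd b ∧ 2 ≤ (t.children b).card

/-- The subtree of `t` rooted at `v` (with the inherited weights). -/
def subtreeAt (t : PreTree) (v : ℕ) : PreTree where
  verts := t.verts.filter fun u => t.Anc v u
  root := v
  parent := fun u => if u = v then v else t.parent u
  wt := t.wt

/-- Simple: every branch (subtree rooted at a child of the branch vertex) is stable. -/
def Simple (t : PreTree) : Prop :=
  ∀ b, t.IsTrunkEnd b → ∀ c ∈ t.children b, (t.subtreeAt c).Stable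

/-- Pruning `t` from `v`: delete all strict descendants of `v` and add their
weights to the weight of `v`. -/
def prune (t : PreTree) (v : ℕ) : PreTree where
  verts := t.verts.filter fun u => ¬ t.SAnc v u
  root := t.root
  parent := t.parent
  wt := fun u =>
    if u = v then t.wt v + ∑ x ∈ t.verts.filter (fun x => t.SAnc v x), t.wt x
    else t.wt u

/-- Normalization: repeatedly prune from positively weighted non-terminal vertices
until every positive vertex is terminal.  In closed form: keep exactly the vertices
with no positively weighted strict ancestor; a kept ghost vertex keeps weight `0`,
while a kept positive vertex absorbs the weights of all of its descendants. -/
def normalize (t : PreTree) : PreTree where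
  verts := t.verts.filter fun u => ∀ p, t.SAnc p u → t.wt p = 0
  root := t.root
  parent := t.parent
  wt := fun u =>
    if t.wt u = 0 then 0 else ∑ x ∈ t.verts.filter (fun x => t.Anc u x), t.wt x

/-- Collapsing a (non-root) vertex `v`: merge `v` into its direct ascendant (the
merged vertex carries the sum of the two weights, the children of `v` become
children of the merged vertex), then normalize. -/
def collapse (t : PreTree) (v : ℕ) : PreTree :=
  normalize
    { verts := t.verts.erase v
      root := t.root
      parent := fun u => if t.parent u = v then t.parent v else t.parent u
      wt := fun u => if u = t.parent v then t.wt (t.parent v) + t.wt v else t.wt u }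

/-- Advancing a (non-root) vertex `v`: every direct descendant `u ≠ v` of the direct
ascendant of `v` is re-attached to `v`, then normalize. -/
def advance (t : PreTree) (v : ℕ) : PreTree :=
  normalize
    { verts := t.verts
      root := t.root
      parent := fun u =>
        if t.parent u = t.parent v ∧ u ≠ t.parent v ∧ u ≠ v then v else t.parent u
      wt := t.wt }

/-- The monoidal transforms of `t`: the advancings of the direct descendants of the
branch vertex. -/
def Mon (t : PreTree) : Set PreTree :=
  {s | ∃ b v, t.IsBranchVertex b ∧ v ∈ t.children b ∧ s = t.advance v}

/-- Isomorphism of weighted rooted trees. -/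
def Iso (s t : PreTree) : Prop :=
  ∃ f : ℕ → ℕ, Set.BijOn f (s.verts : Set ℕ) (t.verts : Set ℕ) ∧ f s.root = t.root ∧
    (∀ v ∈ s.verts, f (s.parent v) = t.parent (f v)) ∧
    ∀ v ∈ s.verts, t.wt (f v) = s.wt v

/-- `Λ_d`: stable terminally weighted rooted trees of total weight `d`. -/
def Lambda (d : ℕ) : Set PreTree :=
  {t | t.IsTree ∧ t.Stable ∧ t.TerminallyWeighted ∧ t.totalWeight = d}

/-- `Λ_{d,[k]}`, defined inductively: `Λ_{d,[1]} = Λ_d` and for `k ≥ 2`,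
`Λ_{d,[k]} = {γ ∈ Λ_{d,[k−1]} : br γ ≥ k+1} ∪ {γ ∈ Mon γ' : γ' ∈ Λ_{d,[k−1]}, br γ' = k}`. -/
def LambdaK (d : ℕ) : ℕ → Set PreTree
  | 0 => Lambda d
  | 1 => Lambda d
  | k + 2 =>
      {t | t ∈ LambdaK d (k + 1) ∧ k + 3 ≤ t.br} ∪
        {t | ∃ t' ∈ LambdaK d (k + 1), t'.br = k + 2 ∧ t ∈ t'.Mon}

/-- Condition (†): every non-terminal direct descendant of the branch vertex has at
least two direct descendants. -/
def Dagger (t : PreTree) : Prop :=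
  ∀ b v, t.IsBranchVertex b → v ∈ t.children b → t.children v ≠ ∅ →
    2 ≤ (t.children v).card

/-- `z_{[b,o]} = ∏_{b ⪰ a ≻ o} z_a`, the product of the variables `z_a` over all
non-root vertices `a` on the path from the root to `b` (including `a = b`).
The variable `z_a` is `X (Sum.inl a)`; the variable `w_b` is `X (Sum.inr b)`. -/
def zpath (R : Type) [CommRing R] (t : PreTree) (b : ℕ) : MvPolynomial (ℕ ⊕ ℕ) R :=
  ∏ a ∈ t.verts.filter (fun a => t.Anc a b ∧ a ≠ t.root), MvPolynomial.X (Sum.inl a)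

/-- `Φ_γ = ∑_{b terminal} z_{[b,o]} · w_b`. -/
def Phi (R : Type) [CommRing R] (t : PreTree) : MvPolynomial (ℕ ⊕ ℕ) R :=
  ∑ b ∈ t.verts.filter (fun b => t.children b = ∅),
    zpath R t b * MvPolynomial.X (Sum.inr b)

end PreTree

namespace PreTree

variable {t : PreTree} {u v x y z p a b c n : ℕ}

lemma mem_children : y ∈ t.children x ↔ y ∈ t.verts ∧ t.parent y = x ∧ y ≠ x := by
  simp [children]

lemma anc_refl (t : PreTree) (x : ℕ) : t.Anc x x := ⟨0, rfl⟩

lemma anc_parent (t : PreTree) (y : ℕ) : t.Anc (t.parent y) y := ⟨1, rfl⟩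

lemma anc_of_mem_children (hy : y ∈ t.children x) : t.Anc x y :=
  ⟨1, (mem_children.1 hy).2.1⟩

lemma mem_of_mem_children (ht : t.IsTree) (hy : y ∈ t.children x) : x ∈ t.verts := by
  obtain ⟨hyv, rfl, -⟩ := mem_children.1 hy
  exact ht.2.1 y hyv

lemma Anc.trans (h₁ : t.Anc x y) (h₂ : t.Anc y z) : t.Anc x z := by
  obtain ⟨n, rfl⟩ := h₁
  obtain ⟨m, rfl⟩ := h₂
  exact ⟨n + m, Function.iterate_add_apply _ _ _ _⟩

lemma anc_or_anc_of_anc (h₁ : t.Anc x z) (h₂ : t.Anc y z) : t.Anc x y ∨ t.Anc y x := by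
  obtain ⟨n, rfl⟩ := h₁
  obtain ⟨m, rfl⟩ := h₂
  rcases le_total n m with h | h
  · exact Or.inr ⟨m - n, by rw [← Function.iterate_add_apply, Nat.sub_add_cancel h]⟩
  · exact Or.inl ⟨n - m, by rw [← Function.iterate_add_apply, Nat.sub_add_cancel h]⟩

lemma iterate_parent_mem (ht : t.IsTree) (hx : x ∈ t.verts) (n : ℕ) :
    t.parent^[n] x ∈ t.verts := by
  induction n with
  | zero => exact hx
  | succ n ih => rw [Function.iterate_succ_apply']; exact ht.2.1 _ ih

lemma Anc.mem (ht : t.IsTree) (hy : y ∈ t.verts) (h : t.Anc x y) : x ∈ t.verts := by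
  obtain ⟨n, rfl⟩ := h
  exact iterate_parent_mem ht hy n

lemma iterate_parent_root (ht : t.IsTree) (n : ℕ) : t.parent^[n] t.root = t.root :=
  Function.iterate_fixed ht.2.2.1 n

lemma eq_root_of_anc_root (ht : t.IsTree) (h : t.Anc x t.root) : x = t.root := by
  obtain ⟨n, rfl⟩ := h
  exact iterate_parent_root ht n

lemma ne_root_of_mem_children (ht : t.IsTree) (hy : y ∈ t.children x) : y ≠ t.root := by
  rintro rfl
  obtain ⟨-, hpy, hyx⟩ := mem_children.1 hy
  exact hyx (ht.2.2.1.symm.trans hpy)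

lemma exists_mem_children_anc (ht : t.IsTree) (hy : y ∈ t.verts) (h : t.Anc x y)
    (hne : x ≠ y) : ∃ c ∈ t.children x, t.Anc c y := by
  let n := Nat.find h
  have hn : t.parent^[n] y = x := Nat.find_spec h
  have hn0 : n ≠ 0 := by rintro h0; rw [h0] at hn; exact hne hn.symm
  refine ⟨t.parent^[n - 1] y, mem_children.2 ⟨iterate_parent_mem ht hy _, ?_,
    Nat.find_min h (by omega)⟩, ⟨n - 1, rfl⟩⟩
  rwa [← Function.iterate_succ_apply' t.parent, Nat.succ_eq_add_one, Nat.sub_add_cancel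
    (Nat.one_le_iff_ne_zero.2 hn0)]

lemma eq_of_anc_of_children_eq_empty (ht : t.IsTree) (hx : t.children x = ∅) (hy : y ∈ t.verts)
    (h : t.Anc x y) : y = x := by
  by_contra hne
  obtain ⟨c, hc, -⟩ := exists_mem_children_anc ht hy h (Ne.symm hne)
  simp [hx] at hc

-- `sInf ∅ = 0`: vertices off the tree get depth `0`.
def depth (t : PreTree) (x : ℕ) : ℕ := sInf {n | t.parent^[n] x = t.root}

lemma iterate_parent_depth (ht : t.IsTree) (hx : x ∈ t.verts) :
    t.parent^[t.depth x] x = t.root :=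
  Nat.sInf_mem (ht.2.2.2 x hx)

lemma depth_le (h : t.parent^[n] x = t.root) : t.depth x ≤ n := Nat.sInf_le h

lemma depth_parent_lt (ht : t.IsTree) (hx : x ∈ t.verts) (hxr : x ≠ t.root) :
    t.depth (t.parent x) < t.depth x := by
  have hd : t.depth x ≠ 0 := fun h => hxr (by simpa [h] using iterate_parent_depth ht hx)
  have : t.depth (t.parent x) ≤ t.depth x - 1 := by
    apply depth_le
    rw [← Function.iterate_succ_apply, Nat.succ_eq_add_one, Nat.sub_add_cancel
      (Nat.one_le_iff_ne_zero.2 hd), iterate_parent_depth ht hx]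
  omega

lemma depth_le_of_anc (ht : t.IsTree) (hy : y ∈ t.verts) (h : t.Anc x y) :
    t.depth x ≤ t.depth y := by
  obtain ⟨n, rfl⟩ := h
  induction n generalizing y with
  | zero => rfl
  | succ n ih =>
    rw [Function.iterate_succ_apply]
    by_cases hyr : y = t.root
    · subst hyr; rw [ht.2.2.1]; exact ih hy
    · exact (ih (ht.2.1 y hy)).trans (depth_parent_lt ht hy hyr).le

lemma depth_lt_of_anc_of_ne (ht : t.IsTree) (hy : y ∈ t.verts) (h : t.Anc x y) (hne : x ≠ y) :
    t.depth x < t.depth y := by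
  obtain ⟨n, rfl⟩ := h
  cases n with
  | zero => exact absurd rfl hne
  | succ n =>
    have hyr : y ≠ t.root := by
      rintro rfl; exact hne (iterate_parent_root ht _)
    rw [Function.iterate_succ_apply] at hne ⊢
    exact (depth_le_of_anc ht (ht.2.1 y hy) ⟨n, rfl⟩).trans_lt (depth_parent_lt ht hy hyr)

lemma depth_of_mem_children (ht : t.IsTree) (hy : y ∈ t.children x) :
    t.depth y = t.depth x + 1 := by
  obtain ⟨hyv, rfl, -⟩ := mem_children.1 hy
  have h₁ := depth_parent_lt ht hyv (ne_root_of_mem_children ht hy)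
  have h₂ : t.depth y ≤ t.depth (t.parent y) + 1 := by
    apply depth_le
    rw [Function.iterate_succ_apply, iterate_parent_depth ht (ht.2.1 y hyv)]
  omega

lemma anc_antisymm (ht : t.IsTree) (hy : y ∈ t.verts) (h₁ : t.Anc x y) (h₂ : t.Anc y x) :
    x = y := by
  by_contra hne
  have := depth_lt_of_anc_of_ne ht hy h₁ hne
  have := depth_lt_of_anc_of_ne ht (h₁.mem ht hy) h₂ (Ne.symm hne)
  omega

lemma not_anc_of_mem_children (ht : t.IsTree) (hy : y ∈ t.children x) : ¬ t.Anc y x := by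
  intro h
  have := depth_le_of_anc ht (mem_of_mem_children ht hy) h
  rw [depth_of_mem_children ht hy] at this
  omega

lemma isAntichain_children (ht : t.IsTree) (x : ℕ) :
    IsAntichain t.Anc (t.children x : Set ℕ) := by
  intro y hy z hz hne h
  have := depth_lt_of_anc_of_ne ht (mem_children.1 hz).1 h hne
  rw [depth_of_mem_children ht hy, depth_of_mem_children ht hz] at this
  omega

lemma anc_or_anc_of_isTrunkEnd (ht : t.IsTree) (hb : t.IsTrunkEnd b) (hx : x ∈ t.verts) :
    t.Anc x b ∨ t.Anc b x := by
  by_cases hxb : t.Anc x b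
  · exact Or.inl hxb
  right
  have hex : ∃ i, t.Anc (t.parent^[i] x) b :=
    ⟨_, (iterate_parent_depth ht hx).symm ▸ ht.2.2.2 b hb.1⟩
  -- `a` is the first vertex on the path from `x` to the root that is an ancestor of `b`
  set i := Nat.find hex
  have hi : t.Anc (t.parent^[i] x) b := Nat.find_spec hex
  have hi0 : i ≠ 0 := by intro h; rw [h] at hi; exact hxb hi
  set a := t.parent^[i] x
  set y := t.parent^[i - 1] x
  have hpy : t.parent y = a := by
    rw [← Function.iterate_succ_apply' t.parent, Nat.succ_eq_add_one,
      Nat.sub_add_cancel (Nat.one_le_iff_ne_zero.2 hi0)]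
  have hyb : ¬ t.Anc y b := Nat.find_min hex (show i - 1 < i by omega)
  by_cases hab : a = b
  · exact ⟨i, hab⟩
  · exfalso
    have hya : y ≠ a := by rintro h; rw [h] at hyb; exact hyb hi
    have hy : y ∈ t.children a := mem_children.2 ⟨iterate_parent_mem ht hx _, hpy, hya⟩
    obtain ⟨c, hc, hcb⟩ := exists_mem_children_anc ht hb.1 hi hab
    have : c = y := Finset.card_le_one.1 (hb.2.2 a ⟨hi, hab⟩).le c hc y hy
    exact hyb (this ▸ hcb)

lemma isTrunkEnd_unique (ht : t.IsTree) (hb : t.IsTrunkEnd b) (hc : t.IsTrunkEnd c) : b = c := by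
  by_contra hne
  rcases anc_or_anc_of_isTrunkEnd ht hb hc.1 with h | h
  · exact hc.2.1 (hb.2.2 c ⟨h, Ne.symm hne⟩)
  · exact hb.2.1 (hc.2.2 b ⟨h, hne⟩)

lemma br_eq (ht : t.IsTree) (hb : t.IsTrunkEnd b) : t.br = (t.children b).card := by
  have : t.verts.filter t.IsTrunkEnd = {b} := by
    ext x
    simp only [Finset.mem_filter, Finset.mem_singleton]
    exact ⟨fun hx => isTrunkEnd_unique ht hx.2 hb, fun h => h ▸ ⟨hb.1, hb⟩⟩
  rw [br, this, Finset.sum_singleton]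

lemma br_eq_zero_or_exists (ht : t.IsTree) :
    t.br = 0 ∨ ∃ b, t.IsTrunkEnd b ∧ t.br = (t.children b).card := by
  by_cases h : ∃ b, t.IsTrunkEnd b
  · obtain ⟨b, hb⟩ := h
    exact Or.inr ⟨b, hb, br_eq ht hb⟩
  · exact Or.inl (Finset.sum_eq_zero fun x hx => absurd ⟨x, (Finset.mem_filter.1 hx).2⟩ h)

lemma br_ne_one (ht : t.IsTree) : t.br ≠ 1 := by
  rcases br_eq_zero_or_exists ht with h | ⟨b, hb, h⟩
  · omega
  · exact h ▸ hb.2.1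

lemma br_eq_zero (h : ∀ x, (t.children x).card ≤ 1) : t.br = 0 :=
  Finset.sum_eq_zero fun x hx => by
    have := (Finset.mem_filter.1 hx).2.2.1
    have := h x
    omega

lemma exists_anc_children_eq_empty (ht : t.IsTree) (hx : x ∈ t.verts) :
    ∃ z ∈ t.verts, t.Anc x z ∧ t.children z = ∅ := by
  obtain ⟨z, hz, hmax⟩ := Finset.exists_max_image (t.verts.filter (t.Anc x)) t.depth
    ⟨x, Finset.mem_filter.2 ⟨hx, anc_refl t x⟩⟩
  rw [Finset.mem_filter] at hz
  refine ⟨z, hz.1, hz.2, Finset.eq_empty_iff_forall_notMem.2 fun c hc => ?_⟩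
  have := hmax c
    (Finset.mem_filter.2 ⟨(mem_children.1 hc).1, hz.2.trans (anc_of_mem_children hc)⟩)
  rw [depth_of_mem_children ht hc] at this
  omega

lemma wt_eq_zero_of_ne_empty (htw : t.TerminallyWeighted) (hx : x ∈ t.verts)
    (hne : t.children x ≠ ∅) : t.wt x = 0 :=
  Nat.eq_zero_of_not_pos (mt (htw x hx).1 hne)

lemma wt_eq_zero_of_anc_of_ne (ht : t.IsTree) (htw : t.TerminallyWeighted) (hy : y ∈ t.verts)
    (h : t.Anc x y) (hne : x ≠ y) : t.wt x = 0 := by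
  obtain ⟨c, hc, -⟩ := exists_mem_children_anc ht hy h hne
  exact wt_eq_zero_of_ne_empty htw (h.mem ht hy) (Finset.ne_empty_of_mem hc)

/-- Each vertex of an antichain has its own terminal descendant, of weight at least one. -/
lemma card_le_totalWeight_of_isAntichain (ht : t.IsTree) (htw : t.TerminallyWeighted)
    {S : Finset ℕ} (hS : S ⊆ t.verts) (hA : IsAntichain t.Anc (S : Set ℕ)) :
    S.card ≤ t.totalWeight := by
  have key : ∀ x, ∃ z, x ∈ t.verts →
      z ∈ t.verts ∧ t.Anc x z ∧ t.children z = ∅ := by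
    intro x
    by_cases hx : x ∈ t.verts
    · obtain ⟨z, h⟩ := exists_anc_children_eq_empty ht hx
      exact ⟨z, fun _ => h⟩
    · exact ⟨0, fun h => absurd h hx⟩
  choose φ hφ using key
  let P := t.verts.filter fun z => t.children z = ∅
  calc S.card ≤ P.card := by
        refine Finset.card_le_card_of_injOn φ (fun x hx => ?_) (fun x hx y hy hxy => ?_)
        · obtain ⟨h₁, -, h₃⟩ := hφ x (hS hx)
          exact Finset.mem_filter.2 ⟨h₁, h₃⟩
        · by_contra hne
          rcases anc_or_anc_of_anc (hφ x (hS hx)).2.1 (hxy ▸ (hφ y (hS hy)).2.1) with h | h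
          · exact hA hx hy hne h
          · exact hA hy hx (Ne.symm hne) h
    _ ≤ ∑ z ∈ P, t.wt z := by
        simpa using Finset.card_nsmul_le_sum P t.wt 1 fun z hz =>
          (htw z (Finset.mem_filter.1 hz).1).2 (Finset.mem_filter.1 hz).2
    _ ≤ t.totalWeight := Finset.sum_le_sum_of_subset (Finset.filter_subset _ _)

lemma card_children_le_totalWeight (ht : t.IsTree) (htw : t.TerminallyWeighted) (x : ℕ) :
    (t.children x).card ≤ t.totalWeight :=
  card_le_totalWeight_of_isAntichain ht htw (Finset.filter_subset _ _) (isAntichain_children ht x)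

/-- Replacing `c` by its (at least two) children in the antichain `t.children x` gives a
larger antichain. -/
lemma card_children_lt_totalWeight (ht : t.IsTree) (htw : t.TerminallyWeighted)
    (hc : c ∈ t.children x) (hc₂ : 2 ≤ (t.children c).card) :
    (t.children x).card < t.totalWeight := by
  let S := (t.children x).erase c ∪ t.children c
  have hA : IsAntichain t.Anc (S : Set ℕ) := by
    rw [Finset.coe_union, isAntichain_union]
    refine ⟨(isAntichain_children ht x).subset (Finset.coe_subset.2 (Finset.erase_subset _ _)),
      isAntichain_children ht c, fun q hq p hp _ => ⟨fun hqp => ?_, fun hpq => ?_⟩⟩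
    · obtain ⟨hqc, hq⟩ := Finset.mem_erase.1 hq
      rcases anc_or_anc_of_anc hqp (anc_of_mem_children hp) with h | h
      · exact isAntichain_children ht x hq hc hqc h
      · exact isAntichain_children ht x hc hq (Ne.symm hqc) h
    · obtain ⟨hqc, hq⟩ := Finset.mem_erase.1 hq
      exact isAntichain_children ht x hc hq (Ne.symm hqc) ((anc_of_mem_children hp).trans hpq)
  have hdisj : Disjoint ((t.children x).erase c) (t.children c) := by
    refine Finset.disjoint_left.2 fun y hy hyc => ?_
    have hxc : x = c := (mem_children.1 (Finset.mem_of_mem_erase hy)).2.1.symm.trans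
      (mem_children.1 hyc).2.1
    exact (mem_children.1 hc).2.2 hxc.symm
  have hS : S ⊆ t.verts := Finset.union_subset
    ((Finset.erase_subset _ _).trans (Finset.filter_subset _ _)) (Finset.filter_subset _ _)
  have := card_le_totalWeight_of_isAntichain ht htw hS hA
  rw [Finset.card_union_of_disjoint hdisj, Finset.card_erase_of_mem hc] at this
  have := Finset.card_pos.2 ⟨c, hc⟩
  omega

lemma normalize_isTree (ht : t.IsTree) : t.normalize.IsTree := by
  refine ⟨Finset.mem_filter.2 ⟨ht.1, fun p hp => absurd (eq_root_of_anc_root ht hp.1) hp.2⟩,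
    fun u hu => ?_, ht.2.2.1, fun u hu => ht.2.2.2 u (Finset.mem_filter.1 hu).1⟩
  obtain ⟨hu, hk⟩ := Finset.mem_filter.1 hu
  refine Finset.mem_filter.2
    ⟨ht.2.1 u hu, fun p ⟨hp, hpu⟩ => hk p ⟨hp.trans (anc_parent t u), ?_⟩⟩
  rintro rfl
  exact hpu (anc_antisymm ht (ht.2.1 p hu) hp (anc_parent t p))

def advanceRaw (t : PreTree) (v : ℕ) : PreTree where
  verts := t.verts
  root := t.root
  parent := fun u =>
    if t.parent u = t.parent v ∧ u ≠ t.parent v ∧ u ≠ v then v else t.parent u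
  wt := t.wt

lemma advance_eq_normalize (t : PreTree) (v : ℕ) : t.advance v = (t.advanceRaw v).normalize :=
  rfl

lemma advanceRaw_parent (hv : v ∈ t.children b) (u : ℕ) :
    (t.advanceRaw v).parent u =
      if t.parent u = b ∧ u ≠ b ∧ u ≠ v then v else t.parent u := by
  obtain ⟨-, rfl, -⟩ := mem_children.1 hv
  rfl

lemma advanceRaw_parent_of_ne (hv : v ∈ t.children b)
    (h : ¬ (t.parent u = b ∧ u ≠ b ∧ u ≠ v)) :
    (t.advanceRaw v).parent u = t.parent u := by
  rw [advanceRaw_parent hv, if_neg h]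

lemma advanceRaw_parent_self (hv : v ∈ t.children b) : (t.advanceRaw v).parent v = b := by
  rw [advanceRaw_parent_of_ne hv fun h => h.2.2 rfl, (mem_children.1 hv).2.1]

lemma advanceRaw_parent_of_anc (ht : t.IsTree) (hv : v ∈ t.children b) (ha : t.Anc a b) :
    (t.advanceRaw v).parent a = t.parent a :=
  advanceRaw_parent_of_ne hv fun h => not_anc_of_mem_children ht
    (mem_children.2 ⟨ha.mem ht (mem_of_mem_children ht hv), h.1, h.2.1⟩) ha

lemma advanceRaw_iterate_of_anc (ht : t.IsTree) (hv : v ∈ t.children b) (ha : t.Anc a b)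
    (n : ℕ) : (t.advanceRaw v).parent^[n] a = t.parent^[n] a := by
  induction n with
  | zero => rfl
  | succ n ih =>
    rw [Function.iterate_succ_apply', Function.iterate_succ_apply', ih,
      advanceRaw_parent_of_anc ht hv (Anc.trans ⟨n, rfl⟩ ha)]

lemma advanceRaw_iterate_self (ht : t.IsTree) (hv : v ∈ t.children b) (n : ℕ) :
    (t.advanceRaw v).parent^[n] v = t.parent^[n] v := by
  cases n with
  | zero => rfl
  | succ n =>
    rw [Function.iterate_succ_apply, Function.iterate_succ_apply, advanceRaw_parent_self hv,
      (mem_children.1 hv).2.1, advanceRaw_iterate_of_anc ht hv (anc_refl t b)]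

lemma advanceRaw_anc_of_anc (ht : t.IsTree) (hv : v ∈ t.children b) (hc : c ∈ t.children b)
    (h : t.Anc c u) : (t.advanceRaw v).Anc c u := by
  obtain ⟨n, hn⟩ := h
  induction n generalizing u with
  | zero => exact hn ▸ anc_refl _ u
  | succ n ih =>
    rw [Function.iterate_succ_apply] at hn
    refine (ih hn).trans ⟨1, advanceRaw_parent_of_ne hv fun h => ?_⟩
    exact not_anc_of_mem_children ht hc (h.1 ▸ ⟨n, hn⟩)

lemma anc_of_advanceRaw_anc (ht : t.IsTree) (hv : v ∈ t.children b)
    (h : (t.advanceRaw v).Anc p u) : p = v ∨ t.Anc p u := by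
  obtain ⟨n, rfl⟩ := h
  induction n generalizing u with
  | zero => exact Or.inr (anc_refl t u)
  | succ n ih =>
    rw [Function.iterate_succ_apply]
    by_cases hr : t.parent u = b ∧ u ≠ b ∧ u ≠ v
    · rw [advanceRaw_parent hv, if_pos hr, advanceRaw_iterate_self ht hv]
      cases n with
      | zero => exact Or.inl rfl
      | succ m =>
        rw [Function.iterate_succ_apply, (mem_children.1 hv).2.1, ← hr.1]
        exact Or.inr (Anc.trans ⟨m, rfl⟩ (anc_parent t u))
    · rw [advanceRaw_parent_of_ne hv hr]
      exact (ih (u := t.parent u)).imp_right (·.trans (anc_parent t u))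

lemma advanceRaw_anc_self_of_not_anc (ht : t.IsTree) (hb : t.IsTrunkEnd b)
    (hv : v ∈ t.children b) (hu : u ∈ t.verts) (hub : ¬ t.Anc u b) :
    (t.advanceRaw v).Anc v u := by
  have hbu := (anc_or_anc_of_isTrunkEnd ht hb hu).resolve_left hub
  obtain ⟨c, hc, hcu⟩ := exists_mem_children_anc ht hu hbu fun h => hub (h ▸ anc_refl t b)
  have hc' := advanceRaw_anc_of_anc ht hv hc hcu
  by_cases hcv : c = v
  · exact hcv ▸ hc'
  · obtain ⟨-, hpc, hcb⟩ := mem_children.1 hc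
    exact Anc.trans ⟨1, by simp [advanceRaw_parent hv, hpc, hcb, hcv]⟩ hc'

lemma advanceRaw_isTree (ht : t.IsTree) (hb : t.IsTrunkEnd b) (hv : v ∈ t.children b) :
    (t.advanceRaw v).IsTree := by
  have hroot : ∀ a, t.Anc a b → (t.advanceRaw v).Anc t.root a := fun a ha => by
    obtain ⟨n, hn⟩ := ht.2.2.2 a (ha.mem ht hb.1)
    exact ⟨n, (advanceRaw_iterate_of_anc ht hv ha n).trans hn⟩
  refine ⟨ht.1, fun u hu => ?_, ?_, fun u hu => ?_⟩
  · rw [advanceRaw_parent hv]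
    split
    · exact (mem_children.1 hv).1
    · exact ht.2.1 u hu
  · exact (advanceRaw_parent_of_anc ht hv (ht.2.2.2 b hb.1)).trans ht.2.2.1
  · by_cases hub : t.Anc u b
    · exact hroot u hub
    · exact ((hroot b (anc_refl t b)).trans ⟨1, advanceRaw_parent_self hv⟩).trans
        (advanceRaw_anc_self_of_not_anc ht hb hv hu hub)

lemma advance_isTree (ht : t.IsTree) (hb : t.IsTrunkEnd b) (hv : v ∈ t.children b) :
    (t.advance v).IsTree :=
  normalize_isTree (advanceRaw_isTree ht hb hv)

lemma advance_verts_of_wt_pos (ht : t.IsTree) (htw : t.TerminallyWeighted)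
    (hb : t.IsTrunkEnd b) (hv : v ∈ t.children b) (hpos : 0 < t.wt v) :
    (t.advance v).verts = t.verts.filter fun u => t.Anc u b ∨ u = v := by
  ext u
  simp only [advance_eq_normalize, normalize, Finset.mem_filter]
  refine ⟨fun ⟨hu, hk⟩ => ⟨hu, ?_⟩,
    fun ⟨hu, hub⟩ => ⟨hu, fun p ⟨hp, hpu⟩ => ?_⟩⟩
  · by_contra h
    push Not at h
    exact hpos.ne' (hk v ⟨advanceRaw_anc_self_of_not_anc ht hb hv hu h.1, Ne.symm h.2⟩)
  · obtain ⟨n, hn⟩ := hp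
    have hpv : t.Anc p v ∧ p ≠ v := by
      rcases hub with hub | rfl
      · rw [advanceRaw_iterate_of_anc ht hv hub] at hn
        have hpb : t.Anc p b := Anc.trans ⟨n, hn⟩ hub
        exact ⟨hpb.trans (anc_of_mem_children hv),
          fun h => not_anc_of_mem_children ht hv (h ▸ hpb)⟩
      · rw [advanceRaw_iterate_self ht hv] at hn
        exact ⟨⟨n, hn⟩, hpu⟩
    change t.wt p = 0
    exact wt_eq_zero_of_anc_of_ne ht htw (mem_children.1 hv).1 hpv.1 hpv.2

lemma mem_children_of_mem_children_advance (ht : t.IsTree) (htw : t.TerminallyWeighted)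
    (hb : t.IsTrunkEnd b) (hv : v ∈ t.children b) (hpos : 0 < t.wt v)
    (hy : y ∈ (t.advance v).children x) : y ∈ t.children x ∧ (t.Anc y b ∨ y = v) := by
  obtain ⟨hyv, hyx, hne⟩ := mem_children.1 hy
  rw [advance_verts_of_wt_pos ht htw hb hv hpos, Finset.mem_filter] at hyv
  refine ⟨mem_children.2 ⟨hyv.1, ?_, hne⟩, hyv.2⟩
  change (t.advanceRaw v).parent y = x at hyx
  rcases hyv.2 with h | rfl
  · rwa [advanceRaw_parent_of_anc ht hv h] at hyx
  · rwa [advanceRaw_parent_self hv, ← (mem_children.1 hv).2.1] at hyx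

lemma card_children_advance_le_one (ht : t.IsTree) (htw : t.TerminallyWeighted)
    (hb : t.IsTrunkEnd b) (hv : v ∈ t.children b) (hpos : 0 < t.wt v) (x : ℕ) :
    ((t.advance v).children x).card ≤ 1 := by
  have key : ∀ {y z}, y ∈ t.children x → z ∈ t.children x → y ≠ z → t.Anc y b →
      t.Anc z b ∨ z = v → False := by
    rintro y z hy hz hne hyb (hzb | rfl)
    · rcases anc_or_anc_of_anc hyb hzb with h | h
      · exact isAntichain_children ht x hy hz hne h
      · exact isAntichain_children ht x hz hy (Ne.symm hne) h
    · obtain rfl : b = x := (mem_children.1 hv).2.1.symm.trans (mem_children.1 hz).2.1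
      exact not_anc_of_mem_children ht hy hyb
  refine Finset.card_le_one.2 fun y hy z hz => ?_
  obtain ⟨hyc, hyb⟩ := mem_children_of_mem_children_advance ht htw hb hv hpos hy
  obtain ⟨hzc, hzb⟩ := mem_children_of_mem_children_advance ht htw hb hv hpos hz
  by_contra hne
  rcases hyb with hyb | rfl
  · exact key hyc hzc hne hyb hzb
  · rcases hzb with hzb | rfl
    · exact key hzc hyc (Ne.symm hne) hzb (Or.inr rfl)
    · exact hne rfl

lemma br_advance_eq_zero_of_wt_pos (ht : t.IsTree) (htw : t.TerminallyWeighted)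
    (hb : t.IsTrunkEnd b) (hv : v ∈ t.children b) (hpos : 0 < t.wt v) :
    (t.advance v).br = 0 :=
  br_eq_zero (card_children_advance_le_one ht htw hb hv hpos)

lemma advance_verts_of_wt_eq_zero (ht : t.IsTree) (htw : t.TerminallyWeighted)
    (hv : v ∈ t.children b) (hg : t.wt v = 0) : (t.advance v).verts = t.verts :=
  Finset.filter_true_of_mem fun u hu p ⟨hp, hpu⟩ => by
    rcases anc_of_advanceRaw_anc ht hv hp with rfl | hp
    · exact hg
    · exact wt_eq_zero_of_anc_of_ne (t := t) ht htw hu hp hpu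

lemma advance_wt_of_wt_eq_zero (ht : t.IsTree) (htw : t.TerminallyWeighted)
    (hv : v ∈ t.children b) (hg : t.wt v = 0) (hu : u ∈ t.verts) :
    (t.advance v).wt u = t.wt u := by
  change (if t.wt u = 0 then 0 else ∑ x ∈ t.verts.filter ((t.advanceRaw v).Anc u), t.wt x) = _
  split_ifs with h0
  · exact h0.symm
  refine Finset.sum_eq_single_of_mem u (Finset.mem_filter.2 ⟨hu, anc_refl _ u⟩)
    fun x hx hxu => ?_
  obtain ⟨hx, hux⟩ := Finset.mem_filter.1 hx
  rcases anc_of_advanceRaw_anc ht hv hux with rfl | hux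
  · exact absurd hg h0
  · exact absurd (eq_of_anc_of_children_eq_empty ht ((htw u hu).1 (Nat.pos_of_ne_zero h0)) hx hux)
      hxu

lemma totalWeight_advance_of_wt_eq_zero (ht : t.IsTree) (htw : t.TerminallyWeighted)
    (hv : v ∈ t.children b) (hg : t.wt v = 0) :
    (t.advance v).totalWeight = t.totalWeight := by
  rw [totalWeight, totalWeight, advance_verts_of_wt_eq_zero ht htw hv hg]
  exact Finset.sum_congr rfl fun x hx => advance_wt_of_wt_eq_zero ht htw hv hg hx

lemma mem_children_advance_iff (ht : t.IsTree) (htw : t.TerminallyWeighted)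
    (hv : v ∈ t.children b) (hg : t.wt v = 0) :
    y ∈ (t.advance v).children x ↔
      y ∈ t.verts ∧ (t.advanceRaw v).parent y = x ∧ y ≠ x := by
  rw [mem_children, advance_verts_of_wt_eq_zero ht htw hv hg]
  rfl

lemma children_advance_of_ne (ht : t.IsTree) (htw : t.TerminallyWeighted)
    (hv : v ∈ t.children b) (hg : t.wt v = 0) (hxb : x ≠ b) (hxv : x ≠ v) :
    (t.advance v).children x = t.children x := by
  ext y
  rw [mem_children_advance_iff ht htw hv hg, mem_children, advanceRaw_parent hv]
  split_ifs with h
  · rw [h.1]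
    exact ⟨fun h' => absurd h'.2.1.symm hxv, fun h' => absurd h'.2.1.symm hxb⟩
  · rfl

lemma children_advance_parent (ht : t.IsTree) (htw : t.TerminallyWeighted)
    (hv : v ∈ t.children b) (hg : t.wt v = 0) : (t.advance v).children b = {v} := by
  obtain ⟨hvv, hvb, hne⟩ := mem_children.1 hv
  ext y
  rw [mem_children_advance_iff ht htw hv hg, advanceRaw_parent hv, Finset.mem_singleton]
  split_ifs with h
  · exact ⟨fun h' => absurd h'.2.1 hne, fun h' => absurd h' h.2.2⟩
  · exact ⟨fun h' => by_contra fun hyv => h ⟨h'.2.1, h'.2.2, hyv⟩,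
      fun h' => h' ▸ ⟨hvv, hvb, hne⟩⟩

lemma children_subset_children_advance (ht : t.IsTree) (htw : t.TerminallyWeighted)
    (hv : v ∈ t.children b) (hg : t.wt v = 0) : t.children v ⊆ (t.advance v).children v := by
  intro y hy
  obtain ⟨hyv, hpy, hne⟩ := mem_children.1 hy
  refine (mem_children_advance_iff ht htw hv hg).2 ⟨hyv, ?_, hne⟩
  rw [advanceRaw_parent_of_ne hv fun h => (mem_children.1 hv).2.2 (hpy ▸ h.1), hpy]

lemma anc_parent_of_anc_of_ne (h : t.Anc p v) (hne : p ≠ v) : t.Anc p (t.parent v) := by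
  obtain ⟨n, rfl⟩ := h
  cases n with
  | zero => exact absurd rfl hne
  | succ n => exact ⟨n, (Function.iterate_succ_apply _ _ _).symm⟩

lemma isTrunkEnd_advance_of_wt_eq_zero (ht : t.IsTree) (htw : t.TerminallyWeighted)
    (hb : t.IsTrunkEnd b) (hv : v ∈ t.children b) (hg : t.wt v = 0)
    (hv₂ : 2 ≤ (t.children v).card) : (t.advance v).IsTrunkEnd v := by
  obtain ⟨hvv, hvb, -⟩ := mem_children.1 hv
  have hcard := hv₂.trans (Finset.card_le_card (children_subset_children_advance ht htw hv hg))
  refine ⟨(advance_verts_of_wt_eq_zero ht htw hv hg).symm ▸ hvv, by omega,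
    fun p ⟨hp, hpv⟩ => ?_⟩
  obtain ⟨n, hn⟩ := hp
  change (t.advanceRaw v).parent^[n] v = p at hn
  rw [advanceRaw_iterate_self ht hv] at hn
  have hpb : t.Anc p b := hvb ▸ anc_parent_of_anc_of_ne ⟨n, hn⟩ hpv
  by_cases hpb' : p = b
  · rw [hpb', children_advance_parent ht htw hv hg, Finset.card_singleton]
  · rw [children_advance_of_ne ht htw hv hg hpb' hpv]
    exact hb.2.2 p ⟨hpb, hpb'⟩

lemma terminallyWeighted_advance_of_wt_eq_zero (ht : t.IsTree) (htw : t.TerminallyWeighted)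
    (hv : v ∈ t.children b) (hg : t.wt v = 0) : (t.advance v).TerminallyWeighted := by
  intro x hx
  rw [advance_verts_of_wt_eq_zero ht htw hv hg] at hx
  rw [advance_wt_of_wt_eq_zero ht htw hv hg hx]
  by_cases hxv : x = v
  · subst hxv
    have hne : t.children x ≠ ∅ := fun h => by simpa [hg] using (htw x hx).2 h
    rw [hg, lt_self_iff_false, false_iff]
    exact fun h => hne (Finset.subset_empty.1 (h ▸ children_subset_children_advance ht htw hv hg))
  by_cases hxb : x = b
  · subst hxb
    rw [wt_eq_zero_of_ne_empty htw hx (Finset.ne_empty_of_mem hv),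
      children_advance_parent ht htw hv hg]
    simp
  · rw [children_advance_of_ne ht htw hv hg hxb hxv]
    exact htw x hx

lemma sanc_of_advanceRaw_anc (ht : t.IsTree) (hb : t.IsTrunkEnd b) (hv : v ∈ t.children b)
    (hx : x ∈ t.verts) (h : (t.advanceRaw v).Anc v x) : t.SAnc b x := by
  have hxb : ¬ t.Anc x b := fun hxb => by
    obtain ⟨n, hn⟩ := h
    rw [advanceRaw_iterate_of_anc ht hv hxb] at hn
    exact not_anc_of_mem_children ht hv (Anc.trans ⟨n, hn⟩ hxb)
  exact ⟨(anc_or_anc_of_isTrunkEnd ht hb hx).resolve_left hxb,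
    fun hbx => hxb (hbx ▸ anc_refl t b)⟩

/-- For terminally weighted trees, the last field is `Simple` together with condition (†);
unlike stability it survives advancing, which leaves the branch vertex with one child. -/
structure Admissible (d : ℕ) (t : PreTree) : Prop where
  isTree : t.IsTree
  terminallyWeighted : t.TerminallyWeighted
  totalWeight_eq : t.totalWeight = d
  stable_below_trunkEnd : ∀ b, t.IsTrunkEnd b → ∀ x ∈ t.verts, t.SAnc b x → t.wt x = 0 →
    2 ≤ (t.children x).card

lemma admissible_of_mem_lambda {d : ℕ} (h : t ∈ Lambda d) : Admissible d t := by
  obtain ⟨ht, hst, htw, hwt⟩ := h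
  refine ⟨ht, htw, hwt, fun b _ x hx hbx hx0 => hst x hx (fun hxr => ?_) hx0⟩
  exact hbx.2 ((eq_root_of_anc_root ht (hxr ▸ hbx.1)).trans hxr.symm)

namespace Admissible

variable {d : ℕ}

lemma br_le (h : Admissible d t) : t.br ≤ d := by
  rcases br_eq_zero_or_exists h.isTree with h0 | ⟨b, -, hb⟩
  · omega
  · rw [hb, ← h.totalWeight_eq]
    exact card_children_le_totalWeight h.isTree h.terminallyWeighted b

lemma br_eq_zero_of_le_one (h : Admissible d t) (hd : d ≤ 1) : t.br = 0 := by
  have := h.br_le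
  have := br_ne_one h.isTree
  omega

lemma wt_pos_of_card_children_eq (h : Admissible d t) (hb : t.IsTrunkEnd b)
    (hc : c ∈ t.children b) (hcard : (t.children b).card = d) : 0 < t.wt c := by
  obtain ⟨hcv, -, hcb⟩ := mem_children.1 hc
  by_contra h0
  have hc₂ :=
    h.stable_below_trunkEnd b hb c hcv ⟨anc_of_mem_children hc, Ne.symm hcb⟩ (by omega)
  have := card_children_lt_totalWeight h.isTree h.terminallyWeighted hc hc₂
  rw [h.totalWeight_eq] at this
  omega

lemma advance_of_wt_eq_zero (h : Admissible d t) (hb : t.IsTrunkEnd b)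
    (hv : v ∈ t.children b) (hg : t.wt v = 0) : Admissible d (t.advance v) := by
  obtain ⟨ht, htw, hwt, hst⟩ := h
  obtain ⟨hvv, -, hvb⟩ := mem_children.1 hv
  have hend := isTrunkEnd_advance_of_wt_eq_zero ht htw hb hv hg
    (hst b hb v hvv ⟨anc_of_mem_children hv, Ne.symm hvb⟩ hg)
  refine ⟨advance_isTree ht hb hv, terminallyWeighted_advance_of_wt_eq_zero ht htw hv hg,
    (totalWeight_advance_of_wt_eq_zero ht htw hv hg).trans hwt, fun b' hb' x hx hvx hx0 => ?_⟩
  obtain rfl := isTrunkEnd_unique (advance_isTree ht hb hv) hb' hend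
  rw [advance_verts_of_wt_eq_zero ht htw hv hg] at hx
  rw [advance_wt_of_wt_eq_zero ht htw hv hg hx] at hx0
  have hbx := sanc_of_advanceRaw_anc ht hb hv hx hvx.1
  rw [children_advance_of_ne ht htw hv hg (Ne.symm hbx.2) (Ne.symm hvx.2)]
  exact hst b hb x hx hbx hx0

lemma advance_or_br_advance_eq_zero (h : Admissible d t) (hb : t.IsTrunkEnd b)
    (hv : v ∈ t.children b) : Admissible d (t.advance v) ∨ (t.advance v).br = 0 :=
  (Nat.eq_zero_or_pos (t.wt v)).imp (h.advance_of_wt_eq_zero hb hv)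
    (br_advance_eq_zero_of_wt_pos h.isTree h.terminallyWeighted hb hv)

end Admissible

lemma admissible_or_br_eq_zero_of_mem_lambdaK {d : ℕ} :
    ∀ {k : ℕ} {t : PreTree}, t ∈ LambdaK d k → Admissible d t ∨ t.br = 0
  | 0, _, h | 1, _, h => Or.inl (admissible_of_mem_lambda h)
  | _ + 2, _, Or.inl ⟨h, _⟩ => admissible_or_br_eq_zero_of_mem_lambdaK h
  | k + 2, _, Or.inr ⟨t', ht', hbr, _, _, hb, hv, rfl⟩ => by
    rcases admissible_or_br_eq_zero_of_mem_lambdaK ht' with h | h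
    · exact h.advance_or_br_advance_eq_zero hb.1 hv
    · omega

end PreTree

theorem lambdaK_d_path_trees_general (d : ℕ) :
    ∀ t ∈ PreTree.LambdaK d d, t.br = 0 := by
  intro t ht
  match d, ht with
  | 0, ht | 1, ht => exact (PreTree.admissible_of_mem_lambda ht).br_eq_zero_of_le_one (by norm_num)
  | k + 2, ht =>
    rcases ht with ⟨ht, hbr⟩ | ⟨t', ht', hbr, b, v, hb, hv, rfl⟩
    · rcases PreTree.admissible_or_br_eq_zero_of_mem_lambdaK ht with h | h
      · exact absurd h.br_le (by omega)
      · exact h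
    · rcases PreTree.admissible_or_br_eq_zero_of_mem_lambdaK ht' with h | h
      · rw [PreTree.br_eq h.isTree hb.1] at hbr
        exact PreTree.br_advance_eq_zero_of_wt_pos h.isTree h.terminallyWeighted hb.1 hv
          (h.wt_pos_of_card_children_eq hb.1 hv hbr)
      · omega

/-- `Λ_{d,[d]}` consists of path trees only: every `γ ∈ Λ_{d,[d]}`
has `br γ = 0`. -/
theorem lambdaK_d_path_trees (d : ℕ) (hd : 0 < d) :
    ∀ t ∈ PreTree.LambdaK d d, t.br = 0 :=
  lambdaK_d_path_trees_general d
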